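/- For every integer N ≥ 1, ord(A,N) ≥ (∏_{p | d_0(N)} ord(A,p)) / L(N), where the product runs over the distinct prime divisors p of d_0(N). -/

import Mathlib

open Matrix Finset

/-- `matOrd A N` is the order of `A` modulo `N`: the least `k ≥ 1`
with `A^k ≡ I (mod N)`. -/
noncomputable def matOrd (A : Matrix (Fin 2) (Fin 2) ℤ) (N : ℕ) : ℕ :=
  sInf {k | 0 < k ∧ ∀ i j, (N : ℤ) ∣ (A ^ k - 1) i j}

/-- The squarefree part `d` of `N = d·s²`, where `s²` is the largest square
dividing `N`. -/
noncomputable def sqfPart (N : ℕ) : ℕ :=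
  ∏ p ∈ N.primeFactors, p ^ (N.factorization p % 2)

/-- `d₀(N) = d / gcd(d, D_A)` where `N = d·s²` with `d` squarefree and
`D_A = 4(tr(A)² - 4)`. -/
noncomputable def dZero (A : Matrix (Fin 2) (Fin 2) ℤ) (N : ℕ) : ℕ :=
  sqfPart N / Nat.gcd (sqfPart N) (4 * (A.trace ^ 2 - 4)).natAbs

open Classical in
/-- `χ(p) = 1` if `tr(A)² - 4` is a nonzero square mod `p`, `-1` otherwise. -/
noncomputable def chi (A : Matrix (Fin 2) (Fin 2) ℤ) (p : ℕ) : ℤ :=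
  if ((A.trace ^ 2 - 4 : ℤ) : ZMod p) ≠ 0 ∧ IsSquare ((A.trace ^ 2 - 4 : ℤ) : ZMod p)
  then 1 else -1

/-- `L(N) = (∏_{p ∣ d₀(N)} (p - χ(p))) / lcm{p - χ(p) : p ∣ d₀(N)}`. -/
noncomputable def LN (A : Matrix (Fin 2) (Fin 2) ℤ) (N : ℕ) : ℕ :=
  (∏ p ∈ (dZero A N).primeFactors, ((p : ℤ) - chi A p).natAbs) /
    (dZero A N).primeFactors.lcm (fun p => ((p : ℤ) - chi A p).natAbs)

/-! Let `p ∣ d₀(N)`. Then `p` is odd and prime to `tr(A)² - 4`, so over `𝔽_{p²}` the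
characteristic polynomial `X² - tr(A) X + 1` of `A` has two distinct roots `λ, λ⁻¹`, namely
`(tr(A) ± r) / 2` with `r² = tr(A)² - 4`. By Euler's criterion `r ^ p = χ(p) r`, so the Frobenius
fixes the roots when `χ(p) = 1` and swaps them when `χ(p) = -1`; in both cases `λ ^ (p - χ(p)) = 1`,
and Cayley–Hamilton gives `ord(A,p) ∣ p - χ(p)`. As also `ord(A,p) ∣ ord(A,N)`, the bound follows
from the elementary fact that `oᵢ ∣ nᵢ` implies `∏ oᵢ ∣ lcm oᵢ · (∏ nᵢ / lcm nᵢ)`. -/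

lemma orderOf_eq_sInf {G : Type*} [Monoid G] (x : G) :
    orderOf x = sInf {n | 0 < n ∧ x ^ n = 1} := by
  simp only [orderOf, Function.minimalPeriod_eq_sInf_n_pos_IsPeriodicPt,
    isPeriodicPt_mul_iff_pow_eq_one]

lemma pow_natAbs_sub_eq_one_of_pow_eq_zpow {G₀ : Type*} [GroupWithZero G₀] {x : G₀} (hx : x ≠ 0)
    {n : ℕ} {e : ℤ} (h : x ^ n = x ^ e) : x ^ ((n : ℤ) - e).natAbs = 1 := by
  have hsub : x ^ ((n : ℤ) - e) = 1 := by
    rw [zpow_sub₀ hx, zpow_natCast, h, div_self (zpow_ne_zero e hx)]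
  rcases Int.natAbs_eq ((n : ℤ) - e) with habs | habs <;> rw [habs] at hsub
  · rwa [zpow_natCast] at hsub
  · rwa [_root_.zpow_neg, inv_eq_one, zpow_natCast] at hsub

open Polynomial in
lemma Matrix.pow_eq_one_of_charpoly_eq {K n : Type*} [Field K] [Fintype n] [DecidableEq n]
    {B : Matrix n n K} {l m : K} (hB : B.charpoly = (X - C l) * (X - C m)) (hlm : l ≠ m)
    {k : ℕ} (hl : l ^ k = 1) (hm : m ^ k = 1) : B ^ k = 1 := by
  have hdvd : B.charpoly ∣ X ^ k - 1 := by
    rw [hB]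
    refine (isCoprime_X_sub_C_of_isUnit_sub (sub_ne_zero.2 hlm).isUnit).mul_dvd ?_ ?_ <;>
      simp [dvd_iff_isRoot, hl, hm]
  obtain ⟨q, hq⟩ := hdvd
  simpa [sub_eq_zero, Matrix.aeval_self_charpoly] using congrArg (aeval B) hq

lemma isSquare_algebraMap_galoisField_two {p : ℕ} [Fact p.Prime] (a : ZMod p) :
    IsSquare (algebraMap (ZMod p) (GaloisField p 2) a) := by
  let := Fintype.ofFinite (GaloisField p 2)
  have hchar : ringChar (GaloisField p 2) = p := ringChar.eq _ p
  by_cases hp : p = 2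
  · exact FiniteField.isSquare_of_char_two (hchar.trans hp) _
  by_cases ha : a = 0
  · simp [ha]
  have hcard : Fintype.card (GaloisField p 2) / 2 = (p - 1) * ((p + 1) / 2) := by
    rw [← Nat.card_eq_fintype_card, GaloisField.card p 2 two_ne_zero]
    obtain ⟨k, rfl⟩ := (Fact.out : p.Prime).odd_of_ne_two hp
    rw [show 2 * k + 1 + 1 = 2 * (k + 1) by ring, Nat.mul_div_cancel_left _ two_pos,
      show (2 * k + 1) ^ 2 = 2 * (2 * k * (k + 1)) + 1 by ring, Nat.mul_add_div two_pos]
    simp [mul_assoc]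
  rw [FiniteField.isSquare_iff (by rwa [hchar]) (by simpa using ha), hcard, pow_mul, ← map_pow,
    ZMod.pow_card_sub_one_eq_one ha, map_one, one_pow]

lemma Finset.prod_dvd_lcm_mul_prod_div_lcm {ι : Type*} {s : Finset ι} {a b : ι → ℕ}
    (hab : ∀ i ∈ s, a i ∣ b i) :
    ∏ i ∈ s, a i ∣ s.lcm a * ((∏ i ∈ s, b i) / s.lcm b) := by
  rcases eq_or_ne (s.lcm b) 0 with h0 | h0
  · simp [h0]
  refine Nat.dvd_of_mul_dvd_mul_right (Nat.pos_of_ne_zero h0) ?_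
  rw [mul_assoc, Nat.div_mul_cancel (Finset.lcm_dvd fun i hi => Finset.dvd_prod_of_mem b hi)]
  have hprod : ∏ i ∈ s, b i = (∏ i ∈ s, a i) * ∏ i ∈ s, b i / a i := by
    rw [← Finset.prod_mul_distrib]
    exact Finset.prod_congr rfl fun i hi => (Nat.mul_div_cancel' (hab i hi)).symm
  have hlcm : s.lcm b ∣ s.lcm a * ∏ i ∈ s, b i / a i := Finset.lcm_dvd fun i hi => by
    rw [← Nat.mul_div_cancel' (hab i hi)]
    exact mul_dvd_mul (Finset.dvd_lcm hi) (Finset.dvd_prod_of_mem _ hi)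
  rw [hprod, mul_left_comm]
  exact mul_dvd_mul_left _ hlcm

lemma Matrix.map_intCast_pow_eq_one_iff {ι : Type*} [Fintype ι] [DecidableEq ι]
    (A : Matrix ι ι ℤ) (R : Type*) [Ring R] (n : ℕ) [CharP R n] (k : ℕ) :
    A.map (Int.cast : ℤ → R) ^ k = 1 ↔ ∀ i j, (n : ℤ) ∣ (A ^ k - 1) i j := by
  have hmap : A.map (Int.cast : ℤ → R) ^ k - 1 = (A ^ k - 1).map (Int.cast : ℤ → R) := by
    change (Int.castRingHom R).mapMatrix A ^ k - 1 = (Int.castRingHom R).mapMatrix (A ^ k - 1)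
    rw [map_sub, map_pow, map_one]
  simp only [← sub_eq_zero (a := _ ^ k), hmap, ← Matrix.ext_iff, Matrix.map_apply,
    Matrix.zero_apply, CharP.intCast_eq_zero_iff R n]

section matOrd

variable (A : Matrix (Fin 2) (Fin 2) ℤ)

lemma matOrd_eq_orderOf (R : Type*) [Ring R] (n : ℕ) [CharP R n] :
    matOrd A n = orderOf (A.map (Int.cast : ℤ → R)) := by
  simp only [matOrd, orderOf_eq_sInf, Matrix.map_intCast_pow_eq_one_iff A R n]

lemma matOrd_dvd_matOrd {m n : ℕ} (h : m ∣ n) : matOrd A m ∣ matOrd A n := by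
  rw [matOrd_eq_orderOf A (ZMod m), matOrd_eq_orderOf A (ZMod n)]
  have hmap : A.map (Int.cast : ℤ → ZMod m) =
      (ZMod.castHom h (ZMod m)).mapMatrix (A.map (Int.cast : ℤ → ZMod n)) := by
    ext i j; simp
  rw [hmap]
  exact orderOf_map_dvd _ _

lemma matOrd_pos {n : ℕ} (hA : A.det = 1) (hn : n ≠ 0) : 0 < matOrd A n := by
  have : NeZero n := ⟨hn⟩
  rw [matOrd_eq_orderOf A (ZMod n), orderOf_pos_iff]
  apply IsUnit.isOfFinOrder
  have hdet : (A.map (Int.cast : ℤ → ZMod n)).det = ((A.det : ℤ) : ZMod n) :=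
    (RingHom.map_det (Int.castRingHom (ZMod n)) A).symm
  rw [Matrix.isUnit_iff_isUnit_det, hdet, hA, Int.cast_one]
  exact isUnit_one

end matOrd

open Polynomial in
lemma charpoly_map_intCast {K : Type*} [Field K] {A : Matrix (Fin 2) (Fin 2) ℤ} (hA : A.det = 1)
    {l m : K} (hsum : l + m = A.trace) (hprod : l * m = 1) :
    (A.map (Int.cast : ℤ → K)).charpoly = (X - C l) * (X - C m) := by
  have htr : (A.map (Int.cast : ℤ → K)).trace = A.trace :=
    (AddMonoidHom.map_trace (Int.castRingHom K).toAddMonoidHom A).symm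
  have hdet : (A.map (Int.cast : ℤ → K)).det = 1 := by
    rw [← Int.cast_one, ← hA]; exact (RingHom.map_det (Int.castRingHom K) A).symm
  rw [Matrix.charpoly_fin_two, htr, hdet, ← hsum, ← hprod, C_add, C_mul]
  ring

lemma chi_eq_one_or_neg_one (A : Matrix (Fin 2) (Fin 2) ℤ) (p : ℕ) :
    chi A p = 1 ∨ chi A p = -1 := by
  unfold chi
  split_ifs
  exacts [Or.inl rfl, Or.inr rfl]

lemma intCast_chi_eq_pow_div_two (A : Matrix (Fin 2) (Fin 2) ℤ) {p : ℕ} [Fact p.Prime]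
    (ha : ((A.trace ^ 2 - 4 : ℤ) : ZMod p) ≠ 0) :
    ((chi A p : ℤ) : ZMod p) = ((A.trace ^ 2 - 4 : ℤ) : ZMod p) ^ (p / 2) := by
  unfold chi
  split_ifs with h
  · simpa using ((ZMod.euler_criterion p ha).1 h.2).symm
  · rcases ZMod.pow_div_two_eq_neg_one_or_one p ha with h1 | h1
    · exact absurd ⟨ha, (ZMod.euler_criterion p ha).2 h1⟩ h
    · rw [h1, Int.cast_neg, Int.cast_one]

lemma pow_char_eq_chi_mul_of_mul_self_eq {A : Matrix (Fin 2) (Fin 2) ℤ} {p : ℕ} [Fact p.Prime]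
    {K : Type*} [Field K] [CharP K p] (hp2 : p ≠ 2) (ha : ((A.trace ^ 2 - 4 : ℤ) : ZMod p) ≠ 0)
    {r : K} (hr : ((A.trace ^ 2 - 4 : ℤ) : K) = r * r) : r ^ p = chi A p * r := by
  have hchi := congrArg (ZMod.castHom dvd_rfl K) (intCast_chi_eq_pow_div_two A ha)
  rw [map_intCast, map_pow, map_intCast] at hchi
  calc r ^ p = (r * r) ^ (p / 2) * r := by
        rw [← sq, ← pow_mul, ← pow_succ,
          Nat.two_mul_div_two_add_one_of_odd ((Fact.out : p.Prime).odd_of_ne_two hp2)]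
    _ = chi A p * r := by rw [← hr, ← hchi]

lemma exists_eigenvalues_pow_natAbs_sub_chi_eq_one (A : Matrix (Fin 2) (Fin 2) ℤ) {p : ℕ}
    [Fact p.Prime] {K : Type*} [Field K] [CharP K p] (hpD : ¬ (p : ℤ) ∣ 4 * (A.trace ^ 2 - 4))
    (hsq : IsSquare ((A.trace ^ 2 - 4 : ℤ) : K)) :
    ∃ l m : K, l + m = A.trace ∧ l * m = 1 ∧ l ≠ m ∧
      l ^ ((p : ℤ) - chi A p).natAbs = 1 ∧ m ^ ((p : ℤ) - chi A p).natAbs = 1 := by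
  have hp2 : p ≠ 2 := by
    rintro rfl; exact hpD (dvd_mul_of_dvd_left (by norm_num) _)
  have ha : ((A.trace ^ 2 - 4 : ℤ) : ZMod p) ≠ 0 := by
    rw [Ne, ZMod.intCast_zmod_eq_zero_iff_dvd]; exact fun h => hpD (h.mul_left 4)
  have h2 : (2 : K) ≠ 0 := Ring.two_ne_zero (by rwa [ringChar.eq K p])
  obtain ⟨r, hr⟩ := hsq
  have hr0 : r ≠ 0 := by
    rintro rfl
    rw [mul_zero, CharP.intCast_eq_zero_iff K p] at hr
    exact hpD (hr.mul_left 4)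
  have hrp := pow_char_eq_chi_mul_of_mul_self_eq hp2 ha hr
  push_cast at hr
  set t : K := (A.trace : K)
  have htp : t ^ p = t := by rw [← frobenius_def, map_intCast]
  have h2p : (2 : K) ^ p = 2 := by rw [← frobenius_def, map_ofNat]
  obtain ⟨l, hl⟩ : ∃ l : K, l = (t + r) / 2 := ⟨_, rfl⟩
  obtain ⟨m, hm⟩ : ∃ m : K, m = (t - r) / 2 := ⟨_, rfl⟩
  have hprod : l * m = 1 := by
    rw [hl, hm, div_mul_div_comm, div_eq_one_iff_eq (mul_ne_zero h2 h2)]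
    linear_combination hr
  have hdiff : l - m = r := by rw [hl, hm, ← sub_div, div_eq_iff h2]; ring
  have hlp : l ^ p = (t + chi A p * r) / 2 := by rw [hl, div_pow, add_pow_char, htp, hrp, h2p]
  have hmp : m ^ p = (t - chi A p * r) / 2 := by rw [hm, div_pow, sub_pow_char, htp, hrp, h2p]
  have hfrob : l ^ p = l ^ chi A p ∧ m ^ p = m ^ chi A p := by
    rcases chi_eq_one_or_neg_one A p with h | h <;> rw [h] at hlp hmp ⊢
    · rw [zpow_one, zpow_one, hlp, hmp, hl, hm]
      push_cast; constructor <;> ring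
    · rw [_root_.zpow_neg_one, _root_.zpow_neg_one, inv_eq_of_mul_eq_one_right hprod,
        inv_eq_of_mul_eq_one_left hprod, hlp, hmp, hl, hm]
      push_cast; constructor <;> ring
  refine ⟨l, m, by rw [hl, hm, ← add_div, div_eq_iff h2]; ring, hprod,
    fun h => hr0 (by rw [← hdiff, h, sub_self]), ?_, ?_⟩
  · exact pow_natAbs_sub_eq_one_of_pow_eq_zpow (left_ne_zero_of_mul_eq_one hprod) hfrob.1
  · exact pow_natAbs_sub_eq_one_of_pow_eq_zpow (right_ne_zero_of_mul_eq_one hprod) hfrob.2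

lemma matOrd_dvd_natAbs_sub_chi {A : Matrix (Fin 2) (Fin 2) ℤ} (hA : A.det = 1) {p : ℕ}
    (hp : p.Prime) (hpD : ¬ (p : ℤ) ∣ 4 * (A.trace ^ 2 - 4)) :
    matOrd A p ∣ ((p : ℤ) - chi A p).natAbs := by
  have : Fact p.Prime := ⟨hp⟩
  have hsq : IsSquare ((A.trace ^ 2 - 4 : ℤ) : GaloisField p 2) := by
    simpa only [map_intCast] using
      isSquare_algebraMap_galoisField_two ((A.trace ^ 2 - 4 : ℤ) : ZMod p)
  obtain ⟨l, m, hsum, hprod, hne, hl, hm⟩ := exists_eigenvalues_pow_natAbs_sub_chi_eq_one A hpD hsq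
  rw [matOrd_eq_orderOf A (GaloisField p 2) p]
  exact orderOf_dvd_of_pow_eq_one
    (Matrix.pow_eq_one_of_charpoly_eq (charpoly_map_intCast hA hsum hprod) hne hl hm)

lemma squarefree_sqfPart (N : ℕ) : Squarefree (sqfPart N) := by
  refine Finset.squarefree_prod_of_pairwise_isCoprime (fun p hp q hq hpq => ?_) fun p hp => ?_
  · exact Nat.coprime_iff_isRelPrime.1 (Nat.coprime_pow_primes _ _
      (Nat.prime_of_mem_primeFactors hp) (Nat.prime_of_mem_primeFactors hq) hpq)
  · rcases Nat.mod_two_eq_zero_or_one (N.factorization p) with h | h <;> rw [h]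
    · exact squarefree_one
    · simpa using (Nat.prime_of_mem_primeFactors hp).prime.squarefree

lemma sqfPart_dvd (N : ℕ) : sqfPart N ∣ N := by
  rcases eq_or_ne N 0 with rfl | hN
  · exact dvd_zero _
  conv_rhs => rw [← Nat.prod_factorization_pow_eq_self hN]
  exact Finset.prod_dvd_prod_of_dvd _ _ fun p _ => pow_dvd_pow p (Nat.mod_le _ _)

lemma dZero_dvd (A : Matrix (Fin 2) (Fin 2) ℤ) (N : ℕ) : dZero A N ∣ N :=
  (Nat.div_dvd_of_dvd (Nat.gcd_dvd_left _ _)).trans (sqfPart_dvd N)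

lemma not_dvd_of_mem_primeFactors_dZero {A : Matrix (Fin 2) (Fin 2) ℤ}
    (hD : A.trace ^ 2 - 4 ≠ 0) {N p : ℕ} (hp : p ∈ (dZero A N).primeFactors) :
    ¬ (p : ℤ) ∣ 4 * (A.trace ^ 2 - 4) := by
  have hcop := Nat.coprime_div_gcd_of_squarefree (squarefree_sqfPart N)
    (Int.natAbs_ne_zero.2 (mul_ne_zero four_ne_zero hD))
  rw [Int.natCast_dvd]
  exact fun hpD => (Nat.prime_of_mem_primeFactors hp).one_lt.ne'
    (Nat.eq_one_of_dvd_coprimes hcop (Nat.dvd_of_mem_primeFactors hp) hpD)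

/-- `ord(A,N) ≥ (∏_{p ∣ d₀(N)} ord(A,p)) / L(N)`. -/
theorem order_ge_prod_div_LN
    (A : Matrix (Fin 2) (Fin 2) ℤ) (hA : A.det = 1) (htr : 2 < |A.trace|) :
    ∀ N : ℕ, 1 ≤ N →
      (∏ p ∈ (dZero A N).primeFactors, (matOrd A p : ℝ)) / (LN A N : ℝ) ≤
        (matOrd A N : ℝ) := by
  intro N hN
  have hD : A.trace ^ 2 - 4 ≠ 0 := (by nlinarith [sq_abs A.trace] : 0 < A.trace ^ 2 - 4).ne'
  have hdvd : ∏ p ∈ (dZero A N).primeFactors, matOrd A p ∣ matOrd A N * LN A N :=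
    (Finset.prod_dvd_lcm_mul_prod_div_lcm fun p hp => matOrd_dvd_natAbs_sub_chi hA
      (Nat.prime_of_mem_primeFactors hp) (not_dvd_of_mem_primeFactors_dZero hD hp)).trans
    (mul_dvd_mul_right (Finset.lcm_dvd fun p hp => matOrd_dvd_matOrd A
      ((Nat.dvd_of_mem_primeFactors hp).trans (dZero_dvd A N))) _)
  rcases eq_or_ne (LN A N) 0 with hL | hL
  · simp [hL]
  rw [div_le_iff₀ (by positivity)]
  exact_mod_cast Nat.le_of_dvd (Nat.mul_pos (matOrd_pos A hA (by omega)) (Nat.pos_of_ne_zero hL))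
    hdvd
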